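/- Suppose f : ℝᵐ⁺ᵏ → ℝ is additively separable in each of two disjoint variable blocks: f(x,y,z) = α(x) + β(y,z) and f(x,y,z) = γ(x,z) + δ(y) for functions α, β, γ, δ (x ∈ ℝᵐ, y ∈ ℝᵏ¹, z ∈ ℝᵏ², m + k₁ + k₂ = m + k). Then f is simultaneously separable in both: there exist functions p : ℝᵐ → ℝ, q : ℝᵏ¹ → ℝ, s : ℝᵏ² → ℝ with f(x,y,z) = p(x) + q(y) + s(z). -/
import Mathlib

/-- If `f(x,y,z)` is additively separable both as `α(x) + β(y,z)` and as
`γ(x,z) + δ(y)`, then it is simultaneously separable: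
`f(x,y,z) = p(x) + q(y) + s(z)`. -/
theorem separable_in_two_blocks_implies_joint
    {m k₁ k₂ : ℕ}
    (f : (Fin m → ℝ) → (Fin k₁ → ℝ) → (Fin k₂ → ℝ) → ℝ)
    (α : (Fin m → ℝ) → ℝ) (β : (Fin k₁ → ℝ) → (Fin k₂ → ℝ) → ℝ)
    (γ : (Fin m → ℝ) → (Fin k₂ → ℝ) → ℝ) (δ : (Fin k₁ → ℝ) → ℝ)
    (h₁ : ∀ x y z, f x y z = α x + β y z)
    (h₂ : ∀ x y z, f x y z = γ x z + δ y) :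
    ∃ (p : (Fin m → ℝ) → ℝ) (q : (Fin k₁ → ℝ) → ℝ) (s : (Fin k₂ → ℝ) → ℝ),
      ∀ x y z, f x y z = p x + q y + s z := by
  refine ⟨α, δ, fun z => β 0 z - δ 0, fun x y z => ?_⟩
  have e1 := h₁ x y z
  have e2 := h₂ x y z
  have e3 := h₁ x 0 z
  have e4 := h₂ x 0 z
  show f x y z = α x + δ y + (β 0 z - δ 0)
  linarith
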